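/- arXiv:math/0412079 — 5 statements merged into one kernel-verified Lean document; each statement's English description precedes it below -/
import Mathlib

section
/- Let β be a nonzero integer such that −β is not a perfect square, and let P_n = n² + β for n ≥ 1. Then there are infinitely many indices n for which the term P_n has no primitive prime divisor. -/
/-- `p` is a primitive prime divisor of the term `S n` of the integer sequence `S`
(indexed from 1): `p` is prime, divides `S n`, and divides no nonzero earlier term. -/
def IsPrimitivePrimeDivisor (S : ℕ → ℤ) (n : ℕ) (p : ℕ) : Prop :=
  p.Prime ∧ (p : ℤ) ∣ S n ∧ ∀ m : ℕ, 1 ≤ m → m < n → S m ≠ 0 → ¬ (p : ℤ) ∣ S m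

/-- There are infinitely many indices `n` for which `P_n = n² + β` has no
primitive prime divisor. -/
theorem infinitely_many_terms_without_primitive_divisor
    (β : ℤ) (hβ : β ≠ 0) (hsq : ¬ ∃ k : ℤ, k ^ 2 = -β) :
    {n : ℕ | 1 ≤ n ∧
      ¬ ∃ p : ℕ, IsPrimitivePrimeDivisor (fun m => (m : ℤ) ^ 2 + β) n p}.Infinite := by
  -- no term is zero
  have hne : ∀ x : ℕ, ((x : ℤ) ^ 2 + β) ≠ 0 := by
    intro x h
    exact hsq ⟨(x : ℤ), by linarith⟩
  apply Set.infinite_of_forall_exists_gt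
  intro a
  set M : ℕ := a + β.natAbs + 2 with hMdef
  have hMβ : (β.natAbs : ℤ) + 2 ≤ (M : ℤ) := by
    have : (M : ℤ) = (a : ℤ) + (β.natAbs : ℤ) + 2 := by push_cast [hMdef]; ring
    have : (0 : ℤ) ≤ (a : ℤ) := Int.ofNat_nonneg a
    omega
  have habs : -((β.natAbs : ℤ)) ≤ β := by
    have h1 : |β| = (β.natAbs : ℤ) := (Int.abs_eq_natAbs β)
    have := neg_abs_le β
    omega
  set N : ℤ := (M : ℤ) ^ 2 + (M : ℤ) + β with hNdef
  have hMsq : (M : ℤ) ≤ (M : ℤ) ^ 2 := by nlinarith [Int.ofNat_nonneg M]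
  have haM : (a : ℤ) + 2 ≤ (M : ℤ) := by
    have : (M : ℤ) = (a : ℤ) + (β.natAbs : ℤ) + 2 := by push_cast [hMdef]; ring
    have : (0 : ℤ) ≤ (β.natAbs : ℤ) := Int.ofNat_nonneg _
    omega
  have hN2 : (M : ℤ) ^ 2 + 2 ≤ N := by
    have : -((β.natAbs : ℤ)) ≤ β := habs
    omega
  have hNbig : (M : ℤ) + 2 ≤ N := by omega
  have hNa : (a : ℤ) + 2 ≤ N := by omega
  have hNpos : 0 ≤ N := by omega
  clear_value N
  have hcast : ((N.toNat : ℕ) : ℤ) = N := Int.toNat_of_nonneg hNpos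
  refine ⟨N.toNat, ⟨?_, ?_⟩, ?_⟩
  · omega
  · rintro ⟨p, hp, hdvd, hmin⟩
    have hpI : Prime (p : ℤ) := Nat.prime_iff_prime_int.mp hp
    have hid : ((N.toNat : ℕ) : ℤ) ^ 2 + β
        = ((M : ℤ) ^ 2 + β) * (((M : ℤ) + 1) ^ 2 + β) := by
      rw [hcast, hNdef]; ring
    simp only at hdvd
    rw [hid] at hdvd
    rcases hpI.dvd_mul.mp hdvd with h | h
    · exact hmin M (by omega) (by omega) (hne M) h
    · exact hmin (M + 1) (by omega) (by omega) (hne (M + 1)) (by simp only [Nat.cast_add, Nat.cast_one]; exact h)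
  · omega
end

section
/- Let β be a nonzero integer such that −β is not a perfect square, let P_n = n² + β, and let n > |β|. Then a prime p is a primitive prime divisor of P_n if and only if p divides P_n and p > 2n. -/
/-- For `n > |β|`, a prime `p` is a primitive prime divisor of `P_n = n² + β`
if and only if `p ∣ P_n` and `p > 2n`. -/
theorem primitive_iff_gt_two_n
    (β : ℤ) (hβ : β ≠ 0) (hsq : ¬ ∃ k : ℤ, k ^ 2 = -β)
    (n : ℕ) (hn : (n : ℤ) > |β|) (p : ℕ) (hp : p.Prime) :
    IsPrimitivePrimeDivisor (fun m => (m : ℤ) ^ 2 + β) n p ↔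
      ((p : ℤ) ∣ (n : ℤ) ^ 2 + β ∧ p > 2 * n) := by
  have hne : ∀ m : ℕ, ((m : ℤ) ^ 2 + β) ≠ 0 := by
    intro m h
    exact hsq ⟨(m : ℤ), by linarith⟩
  have hβ1 : (1 : ℤ) ≤ |β| := by
    have := abs_pos.mpr hβ; omega
  have hn2 : 2 ≤ n := by
    have : (1 : ℤ) < (n : ℤ) := lt_of_le_of_lt hβ1 hn
    exact_mod_cast this
  constructor
  · rintro ⟨_, hdvd, hprim⟩
    refine ⟨hdvd, ?_⟩
    by_contra hle
    push_neg at hle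
    rcases lt_trichotomy p n with h1 | h1 | h1
    · -- p < n, use m = n - p
      refine hprim (n - p) (by omega) (by have := hp.two_le; omega) (hne _) ?_
      have hc : (((n - p : ℕ) : ℤ)) = (n : ℤ) - p := by
        push_cast [Nat.cast_sub h1.le]; ring
      have key : ((n : ℤ) - p) ^ 2 + β = ((n : ℤ) ^ 2 + β) - p * (2 * n - p) := by
        ring
      simp only [hc, key]
      exact dvd_sub hdvd (Dvd.intro _ rfl)
    · -- p = n : then p ∣ β, contradiction with |β| < n
      subst h1
      have hpn : (p : ℤ) ∣ β := by
        have : (p : ℤ) ∣ (p : ℤ) ^ 2 := by exact dvd_pow_self _ (by norm_num)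
        have := dvd_sub hdvd this
        simpa using this
      have : (p : ℤ) ≤ |β| := Int.le_of_dvd (abs_pos.mpr hβ) ((dvd_abs _ _).mpr hpn)
      omega
    · -- n < p ≤ 2n, use m = p - n
      have hp2n : p < 2 * n := by
        rcases lt_or_eq_of_le hle with h | h
        · exact h
        · exfalso
          have h2 : (2 : ℕ) ∣ p := ⟨n, h⟩
          rcases (hp.eq_one_or_self_of_dvd 2 h2) with h' | h' <;> omega
      refine hprim (p - n) (by omega) (by omega) (hne _) ?_
      have hc : (((p - n : ℕ) : ℤ)) = (p : ℤ) - n := by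
        push_cast [Nat.cast_sub h1.le]; ring
      have key : ((p : ℤ) - n) ^ 2 + β = ((n : ℤ) ^ 2 + β) + p * (p - 2 * n) := by
        ring
      simp only [hc, key]
      exact dvd_add hdvd (Dvd.intro _ rfl)
  · rintro ⟨hdvd, hgt⟩
    refine ⟨hp, hdvd, ?_⟩
    intro m hm1 hmn _ hdm
    have hdiff : (p : ℤ) ∣ ((n : ℤ) - m) * ((n : ℤ) + m) := by
      have := dvd_sub hdvd hdm
      have e : ((n : ℤ) ^ 2 + β) - ((m : ℤ) ^ 2 + β) = ((n : ℤ) - m) * ((n : ℤ) + m) := by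
        ring
      rwa [e] at this
    have hpZ : Prime (p : ℤ) := Nat.prime_iff_prime_int.mp hp
    have hmn' : (m : ℤ) < n := by exact_mod_cast hmn
    have hm1' : (1 : ℤ) ≤ m := by exact_mod_cast hm1
    have hpn : ((2 * n : ℕ) : ℤ) < (p : ℤ) := by exact_mod_cast hgt
    push_cast at hpn
    rcases hpZ.dvd_mul.mp hdiff with h | h
    · have := Int.le_of_dvd (by linarith) h
      linarith
    · have := Int.le_of_dvd (by linarith) h
      linarith
end

section
/- Let β be a nonzero integer such that −β is not a perfect square, let P_n = n² + β, and let n > |β|. Then P_n has a primitive prime divisor if and only if P_n is biased, i.e., if and only if P_n has a prime factor q with q > 2√(P_n). -/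
lemma sqrt_bridge (q D : ℤ) (hq : 0 < q) (hD : 0 ≤ D) :
    ((q:ℝ) > 2 * Real.sqrt ((D : ℤ) : ℝ)) ↔ 4 * D < q ^ 2 := by
  have hD' : (0:ℝ) ≤ (D:ℝ) := by exact_mod_cast hD
  have h1 : (2:ℝ) * Real.sqrt ((D:ℤ):ℝ) = Real.sqrt (((4*D : ℤ)):ℝ) := by
    push_cast
    rw [show (4:ℝ) * (D:ℝ) = 2^2 * (D:ℝ) by ring, Real.sqrt_mul (by positivity),
      Real.sqrt_sq (by norm_num)]
  rw [gt_iff_lt, h1, Real.sqrt_lt' (by exact_mod_cast hq)]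
  constructor
  · intro h; exact_mod_cast h
  · intro h; exact_mod_cast h

set_option maxHeartbeats 1000000 in
/-- For `n > |β|`, the term `P_n = n² + β` has a primitive prime divisor if and only if
it is biased, i.e. has a prime factor `q` with `q > 2√(P_n)`. -/
theorem primitive_iff_biased
    (β : ℤ) (hβ : β ≠ 0) (hsq : ¬ ∃ k : ℤ, k ^ 2 = -β)
    (n : ℕ) (hn : (n : ℤ) > |β|) :
    (∃ p : ℕ, IsPrimitivePrimeDivisor (fun m => (m : ℤ) ^ 2 + β) n p) ↔
      ∃ q : ℕ, q.Prime ∧ (q : ℤ) ∣ (n : ℤ) ^ 2 + β ∧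
        (q : ℝ) > 2 * Real.sqrt (((n : ℤ) ^ 2 + β : ℤ) : ℝ) := by
  have hb1 : 1 ≤ |β| := Int.one_le_abs hβ
  have hbu : β ≤ (n:ℤ) - 1 := by linarith [le_abs_self β]
  have hbl : -((n:ℤ) - 1) ≤ β := by linarith [neg_abs_le β]
  have hn2 : (2:ℤ) ≤ (n:ℤ) := by linarith
  have hn2' : 2 ≤ n := by exact_mod_cast hn2
  have hDpos : (0:ℤ) < (n:ℤ)^2 + β := by nlinarith
  have nonzero : ∀ m : ℕ, ((m:ℤ)^2 + β) ≠ 0 := by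
    intro m h
    exact hsq ⟨(m:ℤ), by linarith⟩
  constructor
  · rintro ⟨p, hpp, hpd, hprim⟩
    simp only at hpd hprim
    refine ⟨p, hpp, hpd, ?_⟩
    by_contra hle
    have hq0 : 0 < (p:ℤ) := by exact_mod_cast hpp.pos
    have hsq4 : (p:ℤ)^2 ≤ 4*((n:ℤ)^2 + β) := by
      by_contra h
      push_neg at h
      exact hle ((sqrt_bridge p ((n:ℤ)^2+β) hq0 hDpos.le).mpr h)
    have hp2n : (p:ℤ) ≤ 2*(n:ℤ) := by nlinarith
    rcases lt_trichotomy ((p:ℤ)) ((n:ℤ)) with hlt | heq | hgt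
    · -- p < n
      have hpn : p < n := by exact_mod_cast hlt
      have hm1 : 1 ≤ n - p := by omega
      have hmn : n - p < n := by have := hpp.pos; omega
      have hcast : ((n - p : ℕ) : ℤ) = (n:ℤ) - p := by
        push_cast [Nat.cast_sub hpn.le]; ring
      have hdvdm : (p:ℤ) ∣ ((n - p : ℕ):ℤ)^2 + β := by
        have he : ((n - p : ℕ):ℤ)^2 + β = ((n:ℤ)^2 + β) - (p:ℤ) * (2*(n:ℤ) - p) := by
          rw [hcast]; ring
        rw [he]; exact dvd_sub hpd (dvd_mul_right _ _)
      exact hprim (n - p) hm1 hmn (nonzero _) hdvdm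
    · -- p = n
      have hdβ : (p:ℤ) ∣ β := by
        have h2 : (p:ℤ) ∣ (n:ℤ)^2 := heq ▸ dvd_pow_self (p:ℤ) two_ne_zero
        have h3 := dvd_sub hpd h2
        simpa using h3
      have h4 : (p:ℤ) ∣ |β| := (dvd_abs _ _).mpr hdβ
      have h5 := Int.le_of_dvd (abs_pos.mpr hβ) h4
      linarith
    · rcases lt_trichotomy ((p:ℤ)) (2*(n:ℤ)) with hlt2 | heq2 | hgt2
      · -- n < p < 2n
        have hpn : n < p := by exact_mod_cast hgt
        have hp2n' : p < 2*n := by exact_mod_cast hlt2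
        have hm1 : 1 ≤ p - n := by omega
        have hmn : p - n < n := by omega
        have hcast : ((p - n : ℕ) : ℤ) = (p:ℤ) - n := by
          push_cast [Nat.cast_sub hpn.le]; ring
        have hdvdm : (p:ℤ) ∣ ((p - n : ℕ):ℤ)^2 + β := by
          have he : ((p - n : ℕ):ℤ)^2 + β = ((n:ℤ)^2 + β) + (p:ℤ) * ((p:ℤ) - 2*(n:ℤ)) := by
            rw [hcast]; ring
          rw [he]; exact dvd_add hpd (dvd_mul_right _ _)
        exact hprim (p - n) hm1 hmn (nonzero _) hdvdm
      · -- p = 2n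
        have h1 : (n:ℤ) ∣ (p:ℤ) := ⟨2, by linarith⟩
        have h2 : (n:ℤ) ∣ (n:ℤ)^2 + β := h1.trans hpd
        have h3 : (n:ℤ) ∣ β := by
          have h4 : (n:ℤ) ∣ (n:ℤ)^2 := dvd_pow_self (n:ℤ) two_ne_zero
          simpa using dvd_sub h2 h4
        have h5 := Int.le_of_dvd (abs_pos.mpr hβ) ((dvd_abs _ _).mpr h3)
        linarith
      · linarith
  · rintro ⟨q, hq, hqd, hbig⟩
    have hq0 : 0 < (q:ℤ) := by exact_mod_cast hq.pos
    have hq2 : 4*((n:ℤ)^2 + β) < (q:ℤ)^2 :=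
      (sqrt_bridge q ((n:ℤ)^2+β) hq0 hDpos.le).mp hbig
    refine ⟨q, hq, hqd, ?_⟩
    intro m hm1 hmn _ hdvdm
    simp only at hdvdm
    have hmz : (1:ℤ) ≤ (m:ℤ) := by exact_mod_cast hm1
    have hmnz : (m:ℤ) < (n:ℤ) := by exact_mod_cast hmn
    have hqz : Prime (q:ℤ) := Nat.prime_iff_prime_int.mp hq
    have hdiff : (q:ℤ) ∣ ((n:ℤ) - m) * ((n:ℤ) + m) := by
      have he : ((n:ℤ) - m) * ((n:ℤ) + m) = ((n:ℤ)^2 + β) - ((m:ℤ)^2 + β) := by ring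
      rw [he]; exact dvd_sub hqd hdvdm
    rcases hqz.dvd_or_dvd hdiff with h | h
    · -- q ∣ n - m : impossible, q too big
      have hle := Int.le_of_dvd (by linarith) h
      have hqq : (q:ℤ)*(q:ℤ) ≤ ((n:ℤ)-1)*((n:ℤ)-1) :=
        mul_self_le_mul_self (le_of_lt hq0) (by linarith)
      nlinarith
    · -- q ∣ n + m
      have hle := Int.le_of_dvd (by linarith) h
      have hqn : (n:ℤ) < q := by nlinarith
      obtain ⟨t, ht⟩ := h
      have ht0 : 0 < t := by
        by_contra hc
        push_neg at hc
        have : (q:ℤ) * t ≤ 0 := mul_nonpos_of_nonneg_of_nonpos (le_of_lt hq0) hc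
        linarith
      have ht2 : t < 2 := by
        by_contra hc
        push_neg at hc
        have h2 : (q:ℤ) * 2 ≤ (q:ℤ) * t := mul_le_mul_of_nonneg_left hc (le_of_lt hq0)
        linarith
      have ht1 : t = 1 := by omega
      rw [ht1, mul_one] at ht
      have hq2' : 4*((n:ℤ)^2 + β) < ((n:ℤ)+m)^2 := by rw [ht]; exact hq2
      have hnm : (n:ℤ) - m ≤ 1 := by
        by_contra hc
        push_neg at hc
        have hA : (0:ℤ) ≤ ((n:ℤ) - m - 2) * ((m:ℤ) - 1) :=
          mul_nonneg (by linarith) (by linarith)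
        have hB : (0:ℤ) ≤ ((n:ℤ) - 2) * ((n:ℤ) - m - 2) :=
          mul_nonneg (by linarith) (by linarith)
        nlinarith
      have hm_eq : (m:ℤ) = (n:ℤ) - 1 := by linarith
      have hq_eq : (q:ℤ) = 2*(n:ℤ) - 1 := by rw [← ht, hm_eq]; ring
      have h4 : (q:ℤ) ∣ 4*((n:ℤ)^2 + β) := Dvd.dvd.mul_left hqd 4
      have h6 : (q:ℤ) ∣ 4*β + 1 := by
        have he : 4*β + 1 = 4*((n:ℤ)^2 + β) - (q:ℤ)*(2*(n:ℤ)+1) := by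
          rw [hq_eq]; ring
        rw [he]; exact dvd_sub h4 (dvd_mul_right _ _)
      obtain ⟨t2, ht2'⟩ := h6
      rw [hq_eq] at ht2' hq2
      have hta : t2 ≤ 1 := by
        by_contra hc
        push_neg at hc
        have hA : (0:ℤ) ≤ (t2 - 2) * ((n:ℤ) - 2) := mul_nonneg (by linarith) (by linarith)
        nlinarith
      have htb : -1 ≤ t2 := by
        by_contra hc
        push_neg at hc
        have hA : (0:ℤ) ≤ (-t2 - 2) * ((n:ℤ) - 2) := mul_nonneg (by linarith) (by linarith)
        nlinarith
      have hq2n : 4*((n:ℤ)^2 + β) < 4*(n:ℤ)^2 - 4*(n:ℤ) + 1 := by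
        have h := hq2
        rw [show (2*(n:ℤ)-1)^2 = 4*(n:ℤ)^2 - 4*(n:ℤ) + 1 from by ring] at h
        exact h
      have hcases : t2 = -1 ∨ t2 = 0 ∨ t2 = 1 := by omega
      rcases hcases with h | h | h <;> subst h
      · -- t2 = -1 : 4β = -2n
        linarith
      · -- t2 = 0 : 4β + 1 = 0, impossible
        omega
      · -- t2 = 1 : 4β = 2n - 2
        linarith
end

section
/- Let β be a nonzero integer such that −β is not a perfect square, let P_n = n² + β, and let n > |β|. If P_n has a primitive prime divisor, then that primitive prime divisor is unique: there is exactly one prime p dividing P_n that divides no nonzero term P_m with m < n. -/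
lemma primitive_large (β : ℤ) (hβ : β ≠ 0) (hsq : ¬ ∃ k : ℤ, k ^ 2 = -β)
    (n : ℕ) (hn : (n : ℤ) > |β|) (p : ℕ)
    (hp : IsPrimitivePrimeDivisor (fun m => (m : ℤ) ^ 2 + β) n p) :
    2 * n ≤ p := by
  obtain ⟨hpp, hdvd, hmin⟩ := hp
  simp only at hdvd hmin
  have hb1 : (1:ℤ) ≤ |β| := abs_pos.mpr hβ
  have hn2 : 2 ≤ n := by
    have h1 : (1:ℤ) < n := lt_of_le_of_lt hb1 hn
    exact_mod_cast h1
  by_contra hlt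
  push_neg at hlt
  have hpn : p ≠ n := by
    rintro rfl
    have hdb : (p:ℤ) ∣ β := (Int.dvd_add_right ⟨p, by ring⟩).mp hdvd
    have := Int.le_of_dvd (abs_pos.mpr hβ) ((dvd_abs _ _).mpr hdb)
    omega
  rcases lt_or_gt_of_ne hpn with h1 | h1
  · -- p < n, consider m = n - p
    have hp2 := hpp.two_le
    have hne : ((n - p : ℕ):ℤ)^2 + β ≠ 0 := fun h0 => hsq ⟨(n-p:ℕ), by linarith⟩
    apply hmin (n - p) (by omega) (by omega) hne
    rw [Nat.cast_sub h1.le]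
    have he : ((n:ℤ) - p)^2 + β = ((n:ℤ)^2 + β) - p * (2*n - p) := by ring
    rw [he]
    exact dvd_sub hdvd ⟨2*n - p, rfl⟩
  · -- n < p < 2n, consider m = p - n
    have hne : ((p - n : ℕ):ℤ)^2 + β ≠ 0 := fun h0 => hsq ⟨(p-n:ℕ), by linarith⟩
    apply hmin (p - n) (by omega) (by omega) hne
    rw [Nat.cast_sub h1.le]
    have he : ((p:ℤ) - n)^2 + β = ((n:ℤ)^2 + β) + p * ((p:ℤ) - 2*n) := by ring
    rw [he]
    exact dvd_add hdvd ⟨(p:ℤ) - 2*n, rfl⟩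

/-- For `n > |β|`, if `P_n = n² + β` has a primitive prime divisor then it has
exactly one. -/
theorem primitive_divisor_unique
    (β : ℤ) (hβ : β ≠ 0) (hsq : ¬ ∃ k : ℤ, k ^ 2 = -β)
    (n : ℕ) (hn : (n : ℤ) > |β|)
    (h : ∃ p : ℕ, IsPrimitivePrimeDivisor (fun m => (m : ℤ) ^ 2 + β) n p) :
    ∃! p : ℕ, IsPrimitivePrimeDivisor (fun m => (m : ℤ) ^ 2 + β) n p := by
  obtain ⟨p, hp⟩ := h
  refine ⟨p, hp, fun q hq => ?_⟩
  by_contra hne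
  have hpL := primitive_large β hβ hsq n hn p hp
  have hqL := primitive_large β hβ hsq n hn q hq
  obtain ⟨hpp, hpd, _⟩ := hp
  obtain ⟨hqp, hqd, _⟩ := hq
  simp only at hpd hqd
  have hb1 : (1:ℤ) ≤ |β| := abs_pos.mpr hβ
  have hn2 : 2 ≤ n := by
    have h1 : (1:ℤ) < n := lt_of_le_of_lt hb1 hn
    exact_mod_cast h1
  have hNpos : (0:ℤ) < (n:ℤ)^2 + β := by
    have hβa : -(n:ℤ) < β := by
      have := neg_abs_le β; linarith
    nlinarith [sq_nonneg ((n:ℤ) - 1)]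
  set N := ((n:ℤ)^2 + β).natAbs with hN
  have hNval : (N:ℤ) = (n:ℤ)^2 + β := Int.natAbs_of_nonneg hNpos.le
  have hpN : p ∣ N := by
    have := Int.natAbs_dvd_natAbs.mpr hpd
    simpa using this
  have hqN : q ∣ N := by
    have := Int.natAbs_dvd_natAbs.mpr hqd
    simpa using this
  have hcop : Nat.Coprime p q := (Nat.coprime_primes hpp hqp).mpr (Ne.symm hne)
  have hmul : p * q ∣ N := Nat.Coprime.mul_dvd_of_dvd_of_dvd hcop hpN hqN
  have hNpos' : 0 < N := by
    rw [hN]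
    exact Int.natAbs_pos.mpr (ne_of_gt hNpos)
  have hle := Nat.le_of_dvd hNpos' hmul
  -- cast to ℤ and derive contradiction
  have hleZ : (p:ℤ) * q ≤ (n:ℤ)^2 + β := by
    rw [← hNval]; exact_mod_cast hle
  have hpZ : (2*(n:ℤ)) ≤ p := by exact_mod_cast hpL
  have hqZ : (2*(n:ℤ)) ≤ q := by exact_mod_cast hqL
  have hnZ : (2:ℤ) ≤ n := by exact_mod_cast hn2
  have hβlt : β < (n:ℤ) := lt_of_le_of_lt (le_abs_self β) hn
  nlinarith [mul_le_mul hpZ hqZ (by linarith : (0:ℤ) ≤ 2*(n:ℤ)) (by linarith : (0:ℤ) ≤ (p:ℤ))]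
end

section
/- Let u = 1 + √2 and v = 1 − √2, and define the integer sequence C by C_n = −(uⁿ − 1)(vⁿ − 1) for n ≥ 1 (so C begins 2, 4, 14, 32, 82, …). Then for every odd k ≥ 1 the term C_{2k} has no primitive prime divisor. -/
/-- For the integer sequence `C_n = -((1+√2)ⁿ-1)((1-√2)ⁿ-1)`, the terms `C_{2k}`
for odd `k` have no primitive prime divisor. -/
theorem C_two_k_no_primitive_divisor
    (C : ℕ → ℤ)
    (hC : ∀ n : ℕ, (C n : ℝ) =
      -(((1 + Real.sqrt 2) ^ n - 1) * ((1 - Real.sqrt 2) ^ n - 1)))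
    (k : ℕ) (hk : Odd k) (hk1 : 1 ≤ k) :
    ¬ ∃ p : ℕ, IsPrimitivePrimeDivisor C (2 * k) p := by
  rintro ⟨p, hp, hdvd, hmin⟩
  set a : ℝ := (1 + Real.sqrt 2) ^ k with ha
  set b : ℝ := (1 - Real.sqrt 2) ^ k with hb
  have h2 : Real.sqrt 2 ^ 2 = 2 := Real.sq_sqrt (by norm_num)
  have hs1 : (1 : ℝ) < Real.sqrt 2 := by
    nlinarith [Real.sqrt_nonneg 2]
  have hs2 : Real.sqrt 2 < 2 := by
    nlinarith [Real.sqrt_nonneg 2]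
  have habk : a * b = -1 := by
    rw [ha, hb, ← mul_pow]
    have : (1 + Real.sqrt 2) * (1 - Real.sqrt 2) = -1 := by nlinarith
    rw [this, hk.neg_one_pow]
  -- C (2*k) = (C k)^2 over ℝ
  have hCsq : (C (2 * k) : ℝ) = (C k : ℝ) ^ 2 := by
    rw [hC, hC, mul_comm 2 k, pow_mul, pow_mul, ← ha, ← hb]
    linear_combination (-2 * a * b + 2 * a + 2 * b - 2) * habk
  have hCint : C (2 * k) = (C k) ^ 2 := by exact_mod_cast hCsq
  -- C k ≠ 0
  have haval : (C k : ℝ) = a + b := by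
    rw [hC, ← ha, ← hb]; linear_combination -habk
  have ha1 : 1 < a := by
    apply one_lt_pow₀ (by linarith) (by omega)
  have hb1 : -1 < b := by
    have habs : |b| < 1 := by
      rw [hb, abs_pow]
      apply pow_lt_one₀ (abs_nonneg _) _ (by omega)
      rw [abs_lt]; constructor <;> nlinarith
    linarith [neg_abs_le b]
  have hCk0 : C k ≠ 0 := by
    intro h
    rw [h] at haval
    simp at haval
    linarith
  have hpdvd : (p : ℤ) ∣ C k := by
    have hpp : Prime (p : ℤ) := Nat.prime_iff_prime_int.mp hp
    exact hpp.dvd_of_dvd_pow (hCint ▸ hdvd)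
  exact hmin k hk1 (by omega) hCk0 hpdvd
end
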